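/- Let s ≥ 1 be an integer, I* ⊆ ℝ^d open, and h : I* → ℝ of class C^{s+1} such that ω := ∇h is a C^s diffeomorphism from I* onto an open subset of ℝ^d. Let (k₁,l₁), …, (k_j, l_j) ∈ ℤ^d × ℤ with k_i ≠ 0 for every i, and let R_{k_i,l_i} := {I ∈ I* : ω(I)·k_i + l_i = 0}. If the intersection R_{k₁,l₁} ∩ … ∩ R_{k_j,l_j} is nonempty, then it is a C^s embedded submanifold of I* of codimension r, where r is the rank of the ℤ-module generated by (k₁,l₁), …, (k_j,l_j) in ℤ^{d+1} (i.e., the dimension of their ℚ-linear span); moreover, in that case r equals the dimension of the ℝ-linear span of k₁, …, k_j in ℝ^d. -/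

import Mathlib

/-!
Put `wᵢ = (kᵢ, lᵢ) ∈ ℝ^{d+1}`. A point `I₀` of the intersection gives `ω(I₀)·kᵢ + lᵢ = 0`,
so the functional `(x, t) ↦ ω(I₀)·x + t` vanishes on the span of the `wᵢ`; as it is injective
on the kernel of the projection `(x, t) ↦ x`, a subfamily of the `wᵢ` is independent iff the
corresponding `kᵢ` are, hence rank(w) = rank(k). Rational and real ranks of the integer family
agree because linear independence survives field extension. If `wᵢ` for `i` in a set `A` of
size `r` form a basis of the span, the intersection is the zero set of
`I ↦ (ω(I)·kᵢ + lᵢ)_{i ∈ A}`, whose differential is `K ∘ Dω` with `K` of independent rows and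
`Dω` invertible (`ω` has a differentiable left inverse): a submersion onto `ℝ^r`.
-/

open Set

/-- `M` is a `C^s` embedded submanifold of codimension `r` of the open set `Ω ⊆ ℝ^d`:
near each of its points it is a regular level set of a `C^s` submersion to `ℝ^r`. -/
def IsCodimSubmanifoldOn (d s r : ℕ) (Ω M : Set (Fin d → ℝ)) : Prop :=
  ∀ x ∈ M, ∃ U : Set (Fin d → ℝ), IsOpen U ∧ x ∈ U ∧ U ⊆ Ω ∧
    ∃ f : (Fin d → ℝ) → (Fin r → ℝ),
      ContDiffOn ℝ (s : ℕ∞) f U ∧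
      M ∩ U = {y ∈ U | f y = 0} ∧
      ∀ y ∈ M ∩ U, Function.Surjective ⇑(fderiv ℝ f y)

open Submodule Module Matrix Filter

section LinearAlgebra

variable {K V : Type*} [DivisionRing K] [AddCommGroup V] [Module K V] {ι : Type*}

theorem exists_fin_linearIndependent_span_eq [Finite ι] (v : ι → V) :
    ∃ a : Fin (finrank K (span K (range v))) → ι,
      LinearIndependent K (v ∘ a) ∧ span K (range (v ∘ a)) = span K (range v) := by
  obtain ⟨κ, a, ha, hspan, hind⟩ := exists_linearIndependent' K v
  have : Finite κ := Finite.of_injective a ha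
  have : Fintype κ := Fintype.ofFinite κ
  let e : κ ≃ Fin (finrank K (span K (range v))) :=
    Fintype.equivFinOfCardEq (hspan ▸ (finrank_span_eq_card hind).symm)
  refine ⟨a ∘ e.symm, hind.comp _ e.symm.injective, ?_⟩
  rw [← Function.comp_assoc, range_comp, e.symm.range_eq_univ, image_univ, hspan]

theorem LinearIndependent.card_le_finrank_span_range [Finite ι] {κ : Type*} [Fintype κ]
    {v : ι → V} {a : κ → ι} (h : LinearIndependent K (v ∘ a)) :
    Fintype.card κ ≤ finrank K (span K (range v)) := by
  have := Module.Finite.span_of_finite K (finite_range v)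
  rw [← finrank_span_eq_card h]
  exact Submodule.finrank_mono (span_mono (range_comp_subset_range a v))

theorem finrank_span_range_eq_of_forall_linearIndependent_comp_iff [Finite ι]
    {L W : Type*} [DivisionRing L] [AddCommGroup W] [Module L W] {v : ι → V} {v' : ι → W}
    (h : ∀ (n : ℕ) (a : Fin n → ι), LinearIndependent K (v ∘ a) ↔ LinearIndependent L (v' ∘ a)) :
    finrank K (span K (range v)) = finrank L (span L (range v')) := by
  apply le_antisymm
  · obtain ⟨a, hind, -⟩ := exists_fin_linearIndependent_span_eq (K := K) v
    simpa only [Fintype.card_fin] using ((h _ a).1 hind).card_le_finrank_span_range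
  · obtain ⟨a, hind, -⟩ := exists_fin_linearIndependent_span_eq (K := L) v'
    simpa only [Fintype.card_fin] using ((h _ a).2 hind).card_le_finrank_span_range

theorem forall_apply_comp_eq_zero_iff_of_span_eq {W : Type*} [AddCommGroup W] [Module K W]
    {κ : Type*} {v : ι → V} {a : κ → ι} (h : span K (range (v ∘ a)) = span K (range v))
    (φ : V →ₗ[K] W) : (∀ b, φ (v (a b)) = 0) ↔ ∀ i, φ (v i) = 0 := by
  have hva : (∀ b, φ (v (a b)) = 0) ↔ span K (range (v ∘ a)) ≤ LinearMap.ker φ := by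
    simp [span_le, range_subset_iff]
  have hv : (∀ i, φ (v i) = 0) ↔ span K (range v) ≤ LinearMap.ker φ := by
    simp [span_le, range_subset_iff]
  rw [hva, hv, h]

end LinearAlgebra

theorem finrank_span_range_algebraMap_comp {K : Type*} (L : Type*) [Field K] [Field L]
    [Algebra K L] {ι n : Type*} [Finite ι] [Finite n] (v : ι → n → K) :
    finrank L (span L (range fun i => algebraMap K L ∘ v i)) = finrank K (span K (range v)) :=
  (finrank_span_range_eq_of_forall_linearIndependent_comp_iff fun _ a =>
    (linearIndependent_algebraMap_comp_iff (v := v ∘ a)).symm).symm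

theorem Matrix.mulVec_surjective_of_linearIndependent_row {K m n : Type*} [Field K]
    [Fintype m] [Fintype n] {B : Matrix m n K} (hB : LinearIndependent K B.row) :
    Function.Surjective B.mulVec := by
  have htop : LinearMap.range B.mulVecLin = ⊤ := by
    apply Submodule.eq_top_of_finrank_eq
    rw [finrank_fintype_fun_eq_card, ← finrank_span_eq_card hB]
    exact B.rank_eq_finrank_span_row
  exact fun z => LinearMap.range_eq_top.1 htop z

section Resonance

theorem Fin.snoc_dotProduct_snoc {R : Type*} [CommSemiring R] {n : ℕ} (x y : Fin n → R)
    (a b : R) : (Fin.snoc x a : Fin (n + 1) → R) ⬝ᵥ Fin.snoc y b = x ⬝ᵥ y + a * b := by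
  simp [dotProduct, Fin.sum_univ_castSucc]

variable {R : Type*} [CommRing R] {n : ℕ} {ι : Type*}

theorem disjoint_ker_dotProduct_snoc_one_ker_funLeft_castSucc (Ω : Fin n → R) :
    Disjoint (LinearMap.ker (dotProductBilin R R (Fin.snoc Ω 1 : Fin (n + 1) → R)))
      (LinearMap.ker (LinearMap.funLeft R R (Fin.castSucc (n := n)))) := by
  rw [Submodule.disjoint_def]
  intro x hx hinit
  have hinit : Fin.init x = 0 := hinit
  rw [LinearMap.mem_ker, dotProductBilin_apply_apply, ← Fin.snoc_init_self x, hinit,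
    Fin.snoc_dotProduct_snoc] at hx
  ext i
  induction i using Fin.lastCases with
  | last => simpa using hx
  | cast i => exact congrFun hinit i

theorem linearIndependent_snoc_iff_of_dotProduct_add_eq_zero {v : ι → Fin n → R} {c : ι → R}
    {Ω : Fin n → R} (h : ∀ i, Ω ⬝ᵥ v i + c i = 0) :
    LinearIndependent R (fun i => (Fin.snoc (v i) (c i) : Fin (n + 1) → R)) ↔
      LinearIndependent R v := by
  set P := LinearMap.funLeft R R (Fin.castSucc (n := n))
  have hPw : P ∘ (fun i => (Fin.snoc (v i) (c i) : Fin (n + 1) → R)) = v := by ext; simp [P]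
  refine ⟨fun hind => hPw ▸ hind.map ?_, fun hind => .of_comp P (by rwa [hPw])⟩
  refine (disjoint_ker_dotProduct_snoc_one_ker_funLeft_castSucc Ω).mono_left ?_
  rw [span_le, range_subset_iff]
  simpa [Fin.snoc_dotProduct_snoc] using h

theorem finrank_span_snoc_eq_of_dotProduct_add_eq_zero {K : Type*} [Field K] [Finite ι]
    {v : ι → Fin n → K} {c : ι → K} {Ω : Fin n → K} (h : ∀ i, Ω ⬝ᵥ v i + c i = 0) :
    finrank K (span K (range fun i => (Fin.snoc (v i) (c i) : Fin (n + 1) → K))) =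
      finrank K (span K (range v)) :=
  finrank_span_range_eq_of_forall_linearIndependent_comp_iff fun _ a =>
    linearIndependent_snoc_iff_of_dotProduct_add_eq_zero (v := v ∘ a) (c := c ∘ a) fun b => h (a b)

end Resonance

theorem surjective_fderiv_of_leftInvOn {𝕜 E : Type*} [NontriviallyNormedField 𝕜]
    [NormedAddCommGroup E] [NormedSpace 𝕜 E] [FiniteDimensional 𝕜 E] {ω ψ : E → E}
    {U V : Set E} (hU : IsOpen U) (hV : IsOpen V) (hω : DifferentiableOn 𝕜 ω U)
    (hψ : DifferentiableOn 𝕜 ψ V) (hmaps : MapsTo ω U V) (hinv : LeftInvOn ψ ω U) {y : E}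
    (hy : y ∈ U) : Function.Surjective (fderiv 𝕜 ω y) := by
  have hωy := (hω.differentiableAt (hU.mem_nhds hy)).hasFDerivAt
  have hψy := (hψ.differentiableAt (hV.mem_nhds (hmaps hy))).hasFDerivAt
  have hcomp : (fderiv 𝕜 ψ (ω y)).comp (fderiv 𝕜 ω y) = ContinuousLinearMap.id 𝕜 E :=
    (hψy.comp y hωy).unique <| (hasFDerivAt_id y).congr_of_eventuallyEq <|
      eventually_of_mem (hU.mem_nhds hy) hinv
  have hleft : Function.LeftInverse (fderiv 𝕜 ψ (ω y)) (fderiv 𝕜 ω y) :=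
    DFunLike.congr_fun hcomp
  exact LinearMap.injective_iff_surjective.mp hleft.injective

theorem isCodimSubmanifoldOn_mulVec_comp_add_eq_zero {d s r : ℕ} (hs : 1 ≤ s)
    {U : Set (Fin d → ℝ)} (hU : IsOpen U) {ω : (Fin d → ℝ) → (Fin d → ℝ)}
    (hω : ContDiffOn ℝ (s : ℕ∞) ω U) (hsurj : ∀ y ∈ U, Function.Surjective (fderiv ℝ ω y))
    {B : Matrix (Fin r) (Fin d) ℝ} (hB : Function.Surjective B.mulVec) (c : Fin r → ℝ) :
    IsCodimSubmanifoldOn d s r U {y ∈ U | B *ᵥ ω y + c = 0} := by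
  intro x hx
  refine ⟨U, hU, hx.1, subset_rfl, fun y => B *ᵥ ω y + c, ?_,
    inter_eq_left.2 (sep_subset _ _), ?_⟩
  · exact (B.mulVecLin.toContinuousLinearMap.contDiff.comp_contDiffOn hω).add contDiffOn_const
  · rintro y ⟨-, hy⟩
    have hωy : HasFDerivAt ω (fderiv ℝ ω y) y :=
      ((hω.differentiableOn (by norm_cast; omega)).differentiableAt
        (hU.mem_nhds hy)).hasFDerivAt
    have hf : HasFDerivAt (fun y => B *ᵥ ω y + c)
        (B.mulVecLin.toContinuousLinearMap.comp (fderiv ℝ ω y)) y :=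
      (B.mulVecLin.toContinuousLinearMap.hasFDerivAt.comp y hωy).add_const c
    rw [hf.fderiv]
    exact hB.comp (hsurj y hy)

theorem isCodimSubmanifoldOn_setOf_dotProduct_add_eq_zero {d s : ℕ} (hs : 1 ≤ s)
    {U : Set (Fin d → ℝ)} (hU : IsOpen U) {ω : (Fin d → ℝ) → (Fin d → ℝ)}
    (hω : ContDiffOn ℝ (s : ℕ∞) ω U) (hsurj : ∀ y ∈ U, Function.Surjective (fderiv ℝ ω y))
    {ι : Type*} [Finite ι] {k : ι → Fin d → ℝ} {l : ι → ℝ}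
    (hne : {I ∈ U | ∀ i, ω I ⬝ᵥ k i + l i = 0}.Nonempty) :
    IsCodimSubmanifoldOn d s
      (finrank ℝ (span ℝ (range fun i => (Fin.snoc (k i) (l i) : Fin (d + 1) → ℝ))))
      U {I ∈ U | ∀ i, ω I ⬝ᵥ k i + l i = 0} := by
  obtain ⟨I₀, -, hI₀⟩ := hne
  set w := fun i => (Fin.snoc (k i) (l i) : Fin (d + 1) → ℝ)
  obtain ⟨a, hind, hspan⟩ := exists_fin_linearIndependent_span_eq (K := ℝ) w
  have hindk : LinearIndependent ℝ (k ∘ a) :=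
    (linearIndependent_snoc_iff_of_dotProduct_add_eq_zero (v := k ∘ a) (c := l ∘ a)
      fun b => hI₀ (a b)).1 hind
  have hset : {I ∈ U | ∀ i, ω I ⬝ᵥ k i + l i = 0} =
      {I ∈ U | of (k ∘ a) *ᵥ ω I + l ∘ a = 0} := by
    ext I
    have hφ : ∀ i, dotProductBilin ℝ ℝ (Fin.snoc (ω I) 1) (w i) = ω I ⬝ᵥ k i + l i := by
      simp [w, Fin.snoc_dotProduct_snoc]
    have hrow : ∀ b, (of (k ∘ a) *ᵥ ω I + l ∘ a) b = ω I ⬝ᵥ k (a b) + l (a b) := fun b => by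
      simp [mulVec, dotProduct_comm]
    simp only [mem_ofPred_eq, funext_iff, hrow, Pi.zero_apply, ← hφ,
      forall_apply_comp_eq_zero_iff_of_span_eq hspan]
  rw [hset]
  exact isCodimSubmanifoldOn_mulVec_comp_add_eq_zero hs hU hω hsurj
    (mulVec_surjective_of_linearIndependent_row hindk) _

theorem stmt7_general (d s j : ℕ) (hs : 1 ≤ s) (hj : 1 ≤ j)
    (Istar : Set (Fin d → ℝ)) (hIo : IsOpen Istar)
    (ω : (Fin d → ℝ) → (Fin d → ℝ))
    (hωsm : ContDiffOn ℝ (s : ℕ∞) ω Istar)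
    (V : Set (Fin d → ℝ)) (hV : IsOpen V) (himg : ω '' Istar = V)
    (ψ : (Fin d → ℝ) → (Fin d → ℝ)) (hψ : ContDiffOn ℝ (s : ℕ∞) ψ V)
    (hlinv : ∀ I ∈ Istar, ψ (ω I) = I)
    (k : Fin j → Fin d → ℤ) (l : Fin j → ℤ)
    (M : Set (Fin d → ℝ))
    (hM : M = ⋂ i : Fin j, {I | I ∈ Istar ∧ (∑ m, ω I m * (k i m : ℝ)) + (l i : ℝ) = 0})
    (hne : M.Nonempty) :
    IsCodimSubmanifoldOn d s
      (Module.finrank ℚ (Submodule.span ℚ (Set.range fun i : Fin j =>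
        (Fin.snoc (fun m => ((k i m : ℚ))) ((l i : ℚ)) : Fin (d + 1) → ℚ))))
      Istar M ∧
    Module.finrank ℚ (Submodule.span ℚ (Set.range fun i : Fin j =>
        (Fin.snoc (fun m => ((k i m : ℚ))) ((l i : ℚ)) : Fin (d + 1) → ℚ)))
      = Module.finrank ℝ (Submodule.span ℝ (Set.range fun i : Fin j =>
          (fun m => ((k i m : ℝ)) : Fin d → ℝ))) := by
  set q : Fin j → Fin (d + 1) → ℚ := fun i => Fin.snoc (fun m => (k i m : ℚ)) (l i : ℚ)
  set kℝ : Fin j → Fin d → ℝ := fun i m => (k i m : ℝ)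
  set lℝ : Fin j → ℝ := fun i => (l i : ℝ)
  have hMeq : M = {I ∈ Istar | ∀ i, ω I ⬝ᵥ kℝ i + lℝ i = 0} := by
    ext I
    simp only [hM, mem_iInter, mem_ofPred_eq]
    -- `hj` excludes the empty intersection, which would be all of `ℝ^d`
    exact ⟨fun h => ⟨(h ⟨0, hj⟩).1, fun i => (h i).2⟩, fun h i => ⟨h.1, h.2 i⟩⟩
  have hrank : finrank ℚ (span ℚ (range q)) =
      finrank ℝ (span ℝ (range fun i => (Fin.snoc (kℝ i) (lℝ i) : Fin (d + 1) → ℝ))) := by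
    have hcast : (fun i => algebraMap ℚ ℝ ∘ q i) = fun i => Fin.snoc (kℝ i) (lℝ i) := by
      ext i m
      induction m using Fin.lastCases <;> simp [q, kℝ, lℝ]
    rw [← finrank_span_range_algebraMap_comp ℝ q, hcast]
  have hsurj : ∀ y ∈ Istar, Function.Surjective (fderiv ℝ ω y) :=
    fun _ => surjective_fderiv_of_leftInvOn hIo hV (hωsm.differentiableOn (by norm_cast; omega))
      (hψ.differentiableOn (by norm_cast; omega)) (himg ▸ mapsTo_image ω Istar) hlinv
  rw [hMeq] at hne ⊢
  refine ⟨?_, hrank.trans (finrank_span_snoc_eq_of_dotProduct_add_eq_zero hne.some_mem.2)⟩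
  rw [hrank]
  exact isCodimSubmanifoldOn_setOf_dotProduct_add_eq_zero hs hIo hωsm hsurj hne

/-- a nonempty intersection of resonance surfaces
`R_{kᵢ,lᵢ} = {I ∈ I* : ω(I)·kᵢ + lᵢ = 0}` is a `C^s` submanifold of codimension the rank
of the ℤ-module generated by the `(kᵢ,lᵢ)` (= dimension of their ℚ-span), which moreover
equals the dimension of the ℝ-span of the `kᵢ`. -/
theorem stmt7 (d s j : ℕ) (hs : 1 ≤ s) (hj : 1 ≤ j)
    (Istar : Set (Fin d → ℝ)) (hIo : IsOpen Istar)
    (h : (Fin d → ℝ) → ℝ) (hh : ContDiffOn ℝ ((s + 1 : ℕ) : ℕ∞) h Istar)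
    (ω : (Fin d → ℝ) → (Fin d → ℝ))
    (hωdef : ∀ I ∈ Istar, ∀ i, ω I i = fderiv ℝ h I (Pi.single i 1))
    (hωsm : ContDiffOn ℝ (s : ℕ∞) ω Istar)
    (V : Set (Fin d → ℝ)) (hV : IsOpen V) (himg : ω '' Istar = V)
    (hinj : InjOn ω Istar)
    (ψ : (Fin d → ℝ) → (Fin d → ℝ)) (hψ : ContDiffOn ℝ (s : ℕ∞) ψ V)
    (hlinv : ∀ I ∈ Istar, ψ (ω I) = I)
    (k : Fin j → Fin d → ℤ) (l : Fin j → ℤ) (hk : ∀ i, k i ≠ 0)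
    (M : Set (Fin d → ℝ))
    (hM : M = ⋂ i : Fin j, {I | I ∈ Istar ∧ (∑ m, ω I m * (k i m : ℝ)) + (l i : ℝ) = 0})
    (hne : M.Nonempty) :
    IsCodimSubmanifoldOn d s
      (Module.finrank ℚ (Submodule.span ℚ (Set.range fun i : Fin j =>
        (Fin.snoc (fun m => ((k i m : ℚ))) ((l i : ℚ)) : Fin (d + 1) → ℚ))))
      Istar M ∧
    Module.finrank ℚ (Submodule.span ℚ (Set.range fun i : Fin j =>
        (Fin.snoc (fun m => ((k i m : ℚ))) ((l i : ℚ)) : Fin (d + 1) → ℚ)))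
      = Module.finrank ℝ (Submodule.span ℝ (Set.range fun i : Fin j =>
          (fun m => ((k i m : ℝ)) : Fin d → ℝ))) :=
  stmt7_general d s j hs hj Istar hIo ω hωsm V hV himg ψ hψ hlinv k l M hM hne
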